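/- Let I ⊆ S = K[x_1,x_2,x_3] be a monomial ideal with I = I' (i.e., the gcd of the minimal generators of I is 1). For j ∈ {1,2,3} let S_j = K[{x_1,x_2,x_3} \ {x_j}] and I_j = I ∩ S_j. If I^sat = I, then there exists some j ∈ {1,2,3} such that I_j^sat = I_j, where the saturation of I_j is taken in S_j with respect to the irrelevant maximal ideal of S_j. -/

import Mathlib

open MvPolynomial

noncomputable section

/-- The Stanley space `u·K[Z]` where `u` is the monomial with exponent vector `d`:
the `K`-vector subspace of `K[x_1,…,x_n]` spanned by all monomials `u·w` with
`supp(w) ⊆ Z`. -/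
def stanleySpace (K : Type*) [Field K] {n : ℕ} (d : Fin n →₀ ℕ) (Z : Finset (Fin n)) :
    Submodule K (MvPolynomial (Fin n) K) :=
  Submodule.span K
    {p | ∃ e : Fin n →₀ ℕ, (e.support : Set (Fin n)) ⊆ (Z : Set (Fin n)) ∧
      p = monomial (d + e) (1 : K)}

/-- `(d, Z)` indexed by `Fin r` is a Stanley decomposition of the `K`-subspace `V` of
`K[x_1,…,x_n]`: the Stanley spaces `u_i K[Z_i]` are independent (so their sum is direct)
and their sum is `V`. -/
def IsStanleyDecomp {K : Type*} [Field K] {n : ℕ}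
    (V : Submodule K (MvPolynomial (Fin n) K)) (r : ℕ)
    (d : Fin r → (Fin n →₀ ℕ)) (Z : Fin r → Finset (Fin n)) : Prop :=
  iSupIndep (fun i => stanleySpace K (d i) (Z i)) ∧
    (⨆ i, stanleySpace K (d i) (Z i)) = V

/-- The Stanley depth of a `K`-subspace `V` of `K[x_1,…,x_n]`:
the largest `k` such that `V` has a Stanley decomposition all of whose Stanley spaces
have dimension (number of variables) at least `k`. -/
def sdepth {K : Type*} [Field K] {n : ℕ} (V : Submodule K (MvPolynomial (Fin n) K)) : ℕ :=
  sSup {k | ∃ r d Z, IsStanleyDecomp V r d Z ∧ ∀ i, k ≤ (Z i).card}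

/-- `J^c`: the `K`-subspace of `K[x_1,…,x_n]` spanned by all monomials not contained in
the ideal `J`. -/
def monomialCompl {K : Type*} [Field K] {n : ℕ} (J : Ideal (MvPolynomial (Fin n) K)) :
    Submodule K (MvPolynomial (Fin n) K) :=
  Submodule.span K
    {p | ∃ d : Fin n →₀ ℕ, monomial d (1 : K) ∉ J ∧ p = monomial d (1 : K)}

/-- `sdepth(S/I)`, realized as the Stanley depth of `I^c`. -/
def sdepthQuot {K : Type*} [Field K] {n : ℕ} (I : Ideal (MvPolynomial (Fin n) K)) : ℕ :=
  sdepth (monomialCompl I)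

/-- `sdepth(I)` for an ideal `I`, viewed as a `K`-subspace. -/
def sdepthIdeal {K : Type*} [Field K] {n : ℕ} (I : Ideal (MvPolynomial (Fin n) K)) : ℕ :=
  sdepth (Submodule.restrictScalars K I)

/-- A monomial ideal: an ideal generated by the monomials it contains. -/
def IsMonomialIdeal {K : Type*} [Field K] {n : ℕ} (I : Ideal (MvPolynomial (Fin n) K)) :
    Prop :=
  I = Ideal.span {p | ∃ d : Fin n →₀ ℕ, monomial d (1 : K) ∈ I ∧ p = monomial d (1 : K)}

/-- `G(I)`: the exponent vectors of the minimal monomial generators of `I`, i.e. the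
monomials of `I` that are minimal with respect to divisibility. -/
def minGens {K : Type*} [Field K] {n : ℕ} (I : Ideal (MvPolynomial (Fin n) K)) :
    Set (Fin n →₀ ℕ) :=
  {d | monomial d (1 : K) ∈ I ∧ ∀ e : Fin n →₀ ℕ, e ≤ d → monomial e (1 : K) ∈ I → e = d}

/-- `g(I) = |G(I)|`, the number of minimal monomial generators of `I`. -/
def numGens {K : Type*} [Field K] {n : ℕ} (I : Ideal (MvPolynomial (Fin n) K)) : ℕ :=
  (minGens I).ncard

/-- The exponent vector of `v = gcd(u : u ∈ G(I))`. -/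
def gcdExp {K : Type*} [Field K] {n : ℕ} (I : Ideal (MvPolynomial (Fin n) K)) :
    Fin n →₀ ℕ :=
  Finsupp.ofSupportFinite (fun i => sInf {k | ∃ d ∈ minGens I, d i = k}) (Set.toFinite _)

/-- `I' = (I : v)`, where `v = gcd(u : u ∈ G(I))`. -/
def colonGcd {K : Type*} [Field K] {n : ℕ} (I : Ideal (MvPolynomial (Fin n) K)) :
    Ideal (MvPolynomial (Fin n) K) :=
  Submodule.colon I (Ideal.span {monomial (gcdExp I) (1 : K)})

/-- `c(I) = |supp(I')|`, the number of variables dividing at least one minimal monomial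
generator of `I' = (I : gcd(u : u ∈ G(I)))`. -/
def numSupp {K : Type*} [Field K] {n : ℕ} (I : Ideal (MvPolynomial (Fin n) K)) : ℕ :=
  {i : Fin n | ∃ d ∈ minGens (colonGcd I), d i ≠ 0}.ncard

/-- The irrelevant maximal ideal `(x_1,…,x_n)` of a polynomial ring. -/
def irrelevantIdeal (K : Type*) [Field K] (σ : Type*) : Ideal (MvPolynomial σ K) :=
  Ideal.span (Set.range MvPolynomial.X)

/-- The saturation `I^sat = ∪_{k ≥ 1} (I : (x_1,…,x_n)^k)` of an ideal of a polynomial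
ring with respect to the irrelevant maximal ideal. -/
def satIdeal {K : Type*} [Field K] {σ : Type*} (I : Ideal (MvPolynomial σ K)) :
    Ideal (MvPolynomial σ K) :=
  ⨆ k : ℕ, Submodule.colon I ((irrelevantIdeal K σ ^ k : Ideal (MvPolynomial σ K)) : Set (MvPolynomial σ K))

end


section Aux

open MvPolynomial Finsupp

variable {K : Type*} [Field K]

/-- Monomial ideals are upward closed on exponents. -/
lemma aux_up {n : ℕ} {I : Ideal (MvPolynomial (Fin n) K)} {d e : Fin n →₀ ℕ}
    (hd : monomial d (1 : K) ∈ I) (hde : d ≤ e) : monomial e (1 : K) ∈ I := by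
  have h : monomial e (1 : K) = monomial (e - d) (1 : K) * monomial d (1 : K) := by
    rw [monomial_mul, one_mul, tsub_add_cancel_of_le hde]
  rw [h]
  exact I.mul_mem_left _ hd

/-- Membership in a monomial ideal is detected on the support. -/
lemma aux_mem_iff {n : ℕ} {I : Ideal (MvPolynomial (Fin n) K)} (hI : IsMonomialIdeal I)
    {f : MvPolynomial (Fin n) K} :
    f ∈ I ↔ ∀ d ∈ f.support, monomial d (1 : K) ∈ I := by
  classical
  constructor
  · intro hf
    have key : ∀ d ∈ f.support, ∃ e, monomial e (1 : K) ∈ I ∧ e ≤ d := by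
      rw [hI] at hf
      refine Submodule.span_induction
        (p := fun x _ => ∀ d ∈ x.support, ∃ e, monomial e (1 : K) ∈ I ∧ e ≤ d)
        ?_ ?_ ?_ ?_ hf
      · rintro x ⟨e, heI, rfl⟩ d hd
        rw [support_monomial] at hd
        simp only [one_ne_zero, if_false, Finset.mem_singleton] at hd
        exact ⟨e, heI, hd ▸ le_rfl⟩
      · intro d hd
        simp at hd
      · intro x y _ _ ihx ihy d hd
        rcases Finset.mem_union.mp (MvPolynomial.support_add hd) with h | h
        · exact ihx d h
        · exact ihy d h
      · intro a x _ ih d hd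
        rw [smul_eq_mul] at hd
        obtain ⟨p, hp, q, hq, rfl⟩ := Finset.mem_add.mp (MvPolynomial.support_mul a x hd)
        obtain ⟨e, heI, hle⟩ := ih q hq
        refine ⟨e, heI, hle.trans ?_⟩
        rw [Finsupp.le_def]
        intro m
        simp [Finsupp.add_apply]
    intro d hd
    obtain ⟨e, heI, hle⟩ := key d hd
    exact aux_up heI hle
  · intro h
    have hrw := as_sum f
    rw [hrw]
    refine Ideal.sum_mem _ fun d hd => ?_
    have : (monomial d) (coeff d f) = C (coeff d f) * monomial d (1 : K) := by
      rw [C_mul_monomial, mul_one]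
    rw [this]
    exact I.mul_mem_left _ (h d hd)

lemma aux_colon_le_of_sat {σ : Type*} {J : Ideal (MvPolynomial σ K)} (h : satIdeal J = J) :
    Submodule.colon J (irrelevantIdeal K σ) ≤ J := by
  have h1 : Submodule.colon J ((irrelevantIdeal K σ ^ 1 : Ideal (MvPolynomial σ K)) : Set (MvPolynomial σ K)) ≤ satIdeal J :=
    le_iSup (fun k : ℕ => Submodule.colon J ((irrelevantIdeal K σ ^ k : Ideal (MvPolynomial σ K)) : Set (MvPolynomial σ K))) 1
  rwa [pow_one, h] at h1

lemma aux_sat_of_colon_le {σ : Type*} {J : Ideal (MvPolynomial σ K)}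
    (h : Submodule.colon J (irrelevantIdeal K σ) ≤ J) : satIdeal J = J := by
  apply le_antisymm
  · apply iSup_le
    intro k
    induction k with
    | zero =>
      intro f hf
      rw [Submodule.mem_colon] at hf
      have h1 : (1 : MvPolynomial σ K) ∈ irrelevantIdeal K σ ^ 0 := by
        rw [pow_zero, Ideal.one_eq_top]; trivial
      simpa using hf 1 h1
    | succ k ih =>
      intro f hf
      rw [Submodule.mem_colon] at hf
      apply h
      rw [Submodule.mem_colon]
      intro g hg
      apply ih
      rw [Submodule.mem_colon]
      intro p hp
      have hgp : g * p ∈ irrelevantIdeal K σ ^ (k + 1) := by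
        rw [pow_succ']
        exact Ideal.mul_mem_mul hg hp
      have := hf (g * p) hgp
      simp only [smul_eq_mul] at this ⊢
      rwa [mul_assoc]
  · refine le_trans ?_ (le_iSup (fun k : ℕ => Submodule.colon J ((irrelevantIdeal K σ ^ k : Ideal (MvPolynomial σ K)) : Set (MvPolynomial σ K))) 0)
    intro f hf
    rw [Submodule.mem_colon]
    intro p _
    rw [smul_eq_mul]
    exact Ideal.mul_mem_right p J hf

/-- Saturation of a monomial ideal, on monomials. -/
lemma aux_sat_mono {n : ℕ} {I : Ideal (MvPolynomial (Fin n) K)} (hsat : satIdeal I = I)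
    (d : Fin n →₀ ℕ) (h : ∀ i, monomial (d + Finsupp.single i 1) (1 : K) ∈ I) :
    monomial d (1 : K) ∈ I := by
  apply aux_colon_le_of_sat hsat
  rw [Submodule.mem_colon]
  intro p hp
  refine Submodule.span_induction
    (p := fun x _ => monomial d (1 : K) • x ∈ I) ?_ ?_ ?_ ?_ hp
  · rintro x ⟨i, rfl⟩
    show monomial d (1 : K) • (X i : MvPolynomial (Fin n) K) ∈ I
    have hX : (X i : MvPolynomial (Fin n) K) = monomial (Finsupp.single i 1) 1 := by
      rw [← pow_one (X i : MvPolynomial (Fin n) K), X_pow_eq_monomial]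
    rw [smul_eq_mul, hX, monomial_mul, one_mul]
    exact h i
  · show monomial d (1 : K) • (0 : MvPolynomial (Fin n) K) ∈ I
    rw [smul_zero]; exact I.zero_mem
  · intro x y _ _ ihx ihy
    show monomial d (1 : K) • (x + y) ∈ I
    rw [smul_add]
    exact I.add_mem ihx ihy
  · intro a x _ ih
    show monomial d (1 : K) • (a • x) ∈ I
    rw [smul_eq_mul, smul_eq_mul, mul_left_comm]
    rw [smul_eq_mul] at ih
    exact I.mul_mem_left _ ih

/-- If a monomial is not in a saturated ideal but all its variable shifts except `j` are,
then its whole `x_j`-ray avoids the ideal. -/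
lemma aux_ray {n : ℕ} {I : Ideal (MvPolynomial (Fin n) K)} (hsat : satIdeal I = I)
    {u : Fin n →₀ ℕ} {j : Fin n} (hu : monomial u (1 : K) ∉ I)
    (hstep : ∀ i, i ≠ j → monomial (u + Finsupp.single i 1) (1 : K) ∈ I) :
    ∀ k, monomial (u + Finsupp.single j k) (1 : K) ∉ I := by
  intro k
  induction k with
  | zero => simpa using hu
  | succ k ih =>
    intro hmem
    apply ih
    apply aux_sat_mono hsat
    intro i
    by_cases hij : i = j
    · subst hij
      have heq : u + Finsupp.single i k + Finsupp.single i 1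
          = u + Finsupp.single i (k + 1) := by
        rw [Finsupp.single_add, add_assoc]
      rwa [heq]
    · refine aux_up (hstep i hij) ?_
      rw [Finsupp.le_def]
      intro m
      simp only [Finsupp.add_apply]
      omega

/-- Extraction of a witness from a non-saturated restriction. -/
lemma aux_witness {I : Ideal (MvPolynomial (Fin 3) K)} (hI : IsMonomialIdeal I)
    (j : Fin 3)
    (h : satIdeal (Ideal.comap
          (MvPolynomial.rename (Subtype.val : {i : Fin 3 // i ≠ j} → Fin 3)) I) ≠
        Ideal.comap (MvPolynomial.rename (Subtype.val : {i : Fin 3 // i ≠ j} → Fin 3)) I) :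
    ∃ u : Fin 3 →₀ ℕ, u j = 0 ∧ monomial u (1 : K) ∉ I ∧
      ∀ i, i ≠ j → monomial (u + Finsupp.single i 1) (1 : K) ∈ I := by
  set J := Ideal.comap
    (MvPolynomial.rename (Subtype.val : {i : Fin 3 // i ≠ j} → Fin 3)) I with hJ
  have hnle : ¬ Submodule.colon J (irrelevantIdeal K {i : Fin 3 // i ≠ j}) ≤ J :=
    fun hle => h (aux_sat_of_colon_le hle)
  obtain ⟨f, hfc, hfJ⟩ := SetLike.not_le_iff_exists.mp hnle
  set F := MvPolynomial.rename (Subtype.val : {i : Fin 3 // i ≠ j} → Fin 3) f with hF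
  have hFI : F ∉ I := hfJ
  have hex : ∃ d ∈ F.support, monomial d (1 : K) ∉ I := by
    by_contra hc
    push_neg at hc
    exact hFI ((aux_mem_iff hI).mpr hc)
  obtain ⟨d, hdF, hdI⟩ := hex
  have hdj : d j = 0 := by
    have hc := MvPolynomial.mem_support_iff.mp hdF
    obtain ⟨w, hw, -⟩ := MvPolynomial.coeff_rename_ne_zero _ _ _ hc
    rw [← hw]
    refine Finsupp.mapDomain_notin_range _ _ ?_
    rintro ⟨i, hi⟩
    exact i.2 hi
  refine ⟨d, hdj, hdI, ?_⟩
  intro i hij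
  have hXmem : (X (⟨i, hij⟩ : {i : Fin 3 // i ≠ j}) : MvPolynomial {i : Fin 3 // i ≠ j} K)
      ∈ irrelevantIdeal K {i : Fin 3 // i ≠ j} :=
    Ideal.subset_span ⟨⟨i, hij⟩, rfl⟩
  have hmul : f * X (⟨i, hij⟩ : {i : Fin 3 // i ≠ j}) ∈ J := by
    have := Submodule.mem_colon.mp hfc _ hXmem
    rwa [smul_eq_mul] at this
  have hmulI : F * X i ∈ I := by
    have : MvPolynomial.rename (Subtype.val : {i : Fin 3 // i ≠ j} → Fin 3)
        (f * X (⟨i, hij⟩ : {i : Fin 3 // i ≠ j})) ∈ I := hmul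
    rwa [map_mul, MvPolynomial.rename_X] at this
  have hsupp : d + Finsupp.single i 1 ∈ (F * X i).support := by
    rw [MvPolynomial.mem_support_iff, MvPolynomial.coeff_mul_X]
    exact MvPolynomial.mem_support_iff.mp hdF
  exact (aux_mem_iff hI).mp hmulI _ hsupp

end Aux

/-- Let `I ⊆ K[x_1,x_2,x_3]` be a monomial ideal with `I = I'` (the gcd of the
minimal generators is `1`). For `j ∈ {1,2,3}` let `I_j = I ∩ K[{x_1,x_2,x_3} \ {x_j}]`.
If `I^sat = I`, then `I_j^sat = I_j` for some `j`. -/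
theorem stmt18 {K : Type*} [Field K] (I : Ideal (MvPolynomial (Fin 3) K))
    (hI : IsMonomialIdeal I) (hgcd : gcdExp I = 0) (hsat : satIdeal I = I) :
    ∃ j : Fin 3,
      satIdeal (Ideal.comap
          (MvPolynomial.rename (Subtype.val : {i : Fin 3 // i ≠ j} → Fin 3)) I) =
        Ideal.comap (MvPolynomial.rename (Subtype.val : {i : Fin 3 // i ≠ j} → Fin 3)) I := by
  
  by_contra hcon
  push_neg at hcon
  obtain ⟨u, hu0, huI, hustep⟩ := aux_witness hI 0 (hcon 0)
  obtain ⟨v, hv0, hvI, hvstep⟩ := aux_witness hI 1 (hcon 1)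
  have huray := aux_ray hsat huI hustep
  have hvray := aux_ray hsat hvI hvstep
  have hA : v 2 < u 2 := by
    by_contra hle
    push_neg at hle
    apply hvray (u 1 + 1)
    refine aux_up (hustep 1 (by decide)) ?_
    rw [Finsupp.le_def]
    intro m
    fin_cases m <;>
      simp only [Finsupp.add_apply, Finsupp.single_apply] <;>
      simp_all <;> omega
  apply huray (v 0 + 1)
  refine aux_up (hvstep 0 (by decide)) ?_
  rw [Finsupp.le_def]
  intro m
  fin_cases m <;>
    simp only [Finsupp.add_apply, Finsupp.single_apply] <;>
    simp_all <;> omega
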